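/- arXiv:0910.5408 — 2 statements merged into one kernel-verified Lean document; each statement's English description precedes it below -/
import Mathlib

section
/- (Abstract Handel–Mosher inequality) Let d be an asymmetric metric on X on which a group G acts by isometries, and suppose there is a constant A ≥ 1 with d(Φ·x, x) ≤ A·d(x, Φ·x) for all x ∈ X and Φ ∈ G. Let Φ ∈ G, and suppose there are points x, y ∈ X and reals λ, μ > 1 such that d(x, Φ^j·x) = j·log λ and d(y, Φ^{−j}·y) = j·log μ for all j ≥ 1. Then log μ ≤ A·log λ. -/
/-- Abstract Handel–Mosher inequality: if d(g·x,x) ≤ A·d(x,g·x) for all g,x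
and Φ translates x by log λ and Φ⁻¹ translates y by log μ, then log μ ≤ A·log λ. -/
theorem stmt_6 {X : Type*} {G : Type*} [Group G] [MulAction G X]
    (d : X → X → ℝ) (hd0 : ∀ x y, 0 ≤ d x y)
    (htri : ∀ x y z, d x z ≤ d x y + d y z)
    (hiso : ∀ (g : G) (x y : X), d (g • x) (g • y) = d x y)
    (A : ℝ) (hA : 1 ≤ A)
    (hsym : ∀ (g : G) (x : X), d (g • x) x ≤ A * d x (g • x))
    (Φ : G) (x y : X) (lam mu : ℝ) (hlam : 1 < lam) (hmu : 1 < mu)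
    (hx : ∀ j : ℕ, 1 ≤ j → d x ((Φ ^ j) • x) = (j : ℝ) * Real.log lam)
    (hy : ∀ j : ℕ, 1 ≤ j → d y ((Φ⁻¹ ^ j) • y) = (j : ℝ) * Real.log mu) :
    Real.log mu ≤ A * Real.log lam := by
  set D := d y x + d x y with hD
  have key : ∀ j : ℕ, 1 ≤ j →
      (j : ℝ) * Real.log mu ≤ D + (j : ℝ) * (A * Real.log lam) := by
    intro j hj
    have h1 : d y ((Φ⁻¹ ^ j) • y) ≤ d y x + d x ((Φ⁻¹ ^ j) • x)
        + d ((Φ⁻¹ ^ j) • x) ((Φ⁻¹ ^ j) • y) := by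
      calc d y ((Φ⁻¹ ^ j) • y) ≤ d y ((Φ⁻¹ ^ j) • x) + d ((Φ⁻¹ ^ j) • x) ((Φ⁻¹ ^ j) • y) :=
            htri _ _ _
        _ ≤ (d y x + d x ((Φ⁻¹ ^ j) • x)) + d ((Φ⁻¹ ^ j) • x) ((Φ⁻¹ ^ j) • y) := by
            have := htri y x ((Φ⁻¹ ^ j) • x)
            linarith
        _ = _ := by ring
    have h2 : d ((Φ⁻¹ ^ j) • x) ((Φ⁻¹ ^ j) • y) = d x y := hiso _ _ _
    have h3 : d x ((Φ⁻¹ ^ j) • x) ≤ A * ((j : ℝ) * Real.log lam) := by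
      have heq : d x ((Φ⁻¹ ^ j) • x) = d ((Φ ^ j) • x) x := by
        have := hiso (Φ ^ j) x ((Φ⁻¹ ^ j) • x)
        rw [← this]
        congr 1
        rw [← mul_smul, inv_pow, mul_inv_cancel, one_smul]
      rw [heq, ← hx j hj]
      have := hsym (Φ ^ j) x
      calc d ((Φ ^ j) • x) x ≤ A * d x ((Φ ^ j) • x) := this
        _ = A * d x ((Φ ^ j) • x) := rfl
    have h4 := hy j hj
    rw [h4, h2] at h1
    nlinarith [h1, h3]
  by_contra hcon
  push_neg at hcon
  set ε := Real.log mu - A * Real.log lam with hε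
  have hεpos : 0 < ε := by simp [hε]; linarith
  obtain ⟨n, hn⟩ := exists_nat_gt (D / ε)
  have hn1 : 1 ≤ n + 1 := Nat.le_add_left 1 n
  have := key (n + 1) hn1
  have hnn : D / ε < ((n + 1 : ℕ) : ℝ) := by
    push_cast
    push_cast at hn
    linarith
  have hDlt : D < ((n + 1 : ℕ) : ℝ) * ε := by
    rw [div_lt_iff₀ hεpos] at hnn
    linarith
  nlinarith [this, hDlt]
end

section
/- For each nonzero class a ∈ H₁(Γ; ℤ/2) of a finite graph Γ, there is a finite set S_a of loops, independent of the metric, such that for every positive length function ℓ on Γ, the minimum of ℓ over loops representing a is attained on some element of S_a. (One may take S_a to be the loops representing a that cross each edge at most twice.) -/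
def wordChain {E : Type*} [DecidableEq E] (w : List (E × Bool)) : E → ZMod 2 :=
  fun e => ((w.countP (fun x => x.1 = e) : ℕ) : ZMod 2)

def wordLen {E : Type*} (ℓ : E → ℝ) (w : List (E × Bool)) : ℝ :=
  (w.map (fun x => ℓ x.1)).sum

/-- Source and target of an oriented edge in a graph with endpoint maps ι, t. -/
def src {E V : Type*} (ι t : E → V) (x : E × Bool) : V := if x.2 then ι x.1 else t x.1
def tgt {E V : Type*} (ι t : E → V) (x : E × Bool) : V := if x.2 then t x.1 else ι x.1

/-- A nonempty closed edge path: consecutive edges match up and the last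
endpoint equals the first starting point. -/
def IsClosedPath {E V : Type*} (ι t : E → V) (w : List (E × Bool)) : Prop :=
  w ≠ [] ∧ w.Chain' (fun a b => tgt ι t a = src ι t b) ∧
    ∀ a b, w.getLast? = some a → w.head? = some b → tgt ι t a = src ι t b

/-!
A closed path crossing an edge at least three times traverses it twice in the same direction,
so it has the form `A z B z C`. Since `B` runs from the end of `z` back to its start, `A B⁻¹ C`
is again a closed path; it has the same `ℤ/2`-chain (the two copies of `z` cancel) and is
shorter by `2 ℓ(z) ≥ 0`. The word length drops by two each time, so every representative of `a`
can be shortened to one crossing each edge at most twice. Such loops have word length at most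
`2 |E|`, hence form a finite set, and a minimum over that set is a minimum over all
representatives. The shortcut cannot be empty because the empty word has chain `0 ≠ a`.
-/

section Walks

variable {E V : Type*} (ι t : E → V)

def IsWalk (u v : V) : List (E × Bool) → Prop
  | [] => u = v
  | x :: w => src ι t x = u ∧ IsWalk (tgt ι t x) v w

variable {ι t}

@[simp]
theorem isWalk_nil {u v : V} : IsWalk ι t u v [] ↔ u = v := Iff.rfl

@[simp]
theorem isWalk_cons {u v : V} {x : E × Bool} {w : List (E × Bool)} :
    IsWalk ι t u v (x :: w) ↔ src ι t x = u ∧ IsWalk ι t (tgt ι t x) v w := Iff.rfl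

theorem isWalk_append {u v : V} {w₁ w₂ : List (E × Bool)} :
    IsWalk ι t u v (w₁ ++ w₂) ↔ ∃ m, IsWalk ι t u m w₁ ∧ IsWalk ι t m v w₂ := by
  induction w₁ generalizing u with
  | nil => simp
  | cons x w₁ ih => simp [ih, and_assoc]

theorem isWalk_cons_iff_isChain {u v : V} {x : E × Bool} {w : List (E × Bool)} :
    IsWalk ι t u v (x :: w) ↔ src ι t x = u ∧
      (x :: w).IsChain (fun a b => tgt ι t a = src ι t b) ∧
      tgt ι t ((x :: w).getLast (List.cons_ne_nil x w)) = v := by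
  induction w generalizing x u with
  | nil => simp
  | cons y w ih =>
    rw [isWalk_cons, ih, List.isChain_cons_cons, List.getLast_cons_cons]
    grind

theorem isClosedPath_iff_isWalk {w : List (E × Bool)} :
    IsClosedPath ι t w ↔ w ≠ [] ∧ ∃ u, IsWalk ι t u u w := by
  cases w with
  | nil => simp [IsClosedPath]
  | cons x w =>
    simp only [IsClosedPath, List.getLast?_eq_some_getLast (List.cons_ne_nil x w), List.head?_cons,
      Option.some.injEq, isWalk_cons_iff_isChain, exists_eq_left', List.Chain']
    simp

def reversePath (w : List (E × Bool)) : List (E × Bool) :=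
  (w.map fun x => (x.1, !x.2)).reverse

theorem IsWalk.reverse {u v : V} {w : List (E × Bool)} (h : IsWalk ι t u v w) :
    IsWalk ι t v u (reversePath w) := by
  induction w generalizing u with
  | nil => exact h.symm
  | cons x w ih =>
    obtain ⟨rfl, hw⟩ := h
    simp only [reversePath, List.map_cons, List.reverse_cons, isWalk_append] at ih ⊢
    refine ⟨tgt ι t x, ih hw, ?_⟩
    obtain ⟨e, b⟩ := x
    cases b <;> simp [src, tgt]

theorem IsWalk.shortcut {u v : V} {A B C : List (E × Bool)} {z : E × Bool}
    (h : IsWalk ι t u v (A ++ z :: B ++ z :: C)) :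
    IsWalk ι t u v (A ++ reversePath B ++ C) := by
  simp only [isWalk_append, isWalk_cons] at h ⊢
  obtain ⟨m, ⟨p, hA, hzp, hB⟩, hzm, hC⟩ := h
  subst hzp hzm
  exact ⟨tgt ι t z, ⟨src ι t z, hA, hB.reverse⟩, hC⟩

theorem wordLen_shortcut (ℓ : E → ℝ) (A B C : List (E × Bool)) (z : E × Bool) :
    wordLen ℓ (A ++ z :: B ++ z :: C) = wordLen ℓ (A ++ reversePath B ++ C) + 2 * ℓ z.1 := by
  simp only [wordLen, reversePath, List.append_assoc, List.cons_append, List.map_append, List.map_cons,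
    List.sum_append, List.sum_cons, List.map_reverse, List.map_map, Function.comp_def,
    List.sum_reverse]
  ring

end Walks

theorem List.exists_eq_append_cons_append_cons_of_two_le_count {α : Type*} [BEq α] [LawfulBEq α]
    {z : α} {w : List α} (h : 2 ≤ w.count z) : ∃ A B C, w = A ++ z :: B ++ z :: C := by
  have hzz : List.Sublist [z, z] w := List.replicate_sublist_iff.mpr h
  obtain ⟨r₁, r₂, rfl, h₁, h₂⟩ := List.cons_sublist_iff.mp hzz
  obtain ⟨A, B₁, rfl⟩ := List.append_of_mem h₁
  obtain ⟨B₂, C, rfl⟩ := List.append_of_mem (List.singleton_sublist.mp h₂)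
  exact ⟨A, B₁ ++ B₂, C, by simp⟩

section Crossings

variable {E : Type*} [DecidableEq E]

theorem countP_fst_reversePath (w : List (E × Bool)) (e : E) :
    (reversePath w).countP (fun x => x.1 = e) = w.countP (fun x => x.1 = e) := by
  simp [reversePath, List.countP_map, Function.comp_def]

@[simp]
theorem wordChain_nil : wordChain ([] : List (E × Bool)) = 0 := by
  funext e; simp [wordChain]

theorem countP_fst_shortcut (A B C : List (E × Bool)) (z : E × Bool) (e : E) :
    (A ++ z :: B ++ z :: C).countP (fun x => x.1 = e) =
      (A ++ reversePath B ++ C).countP (fun x => x.1 = e) + 2 * if z.1 = e then 1 else 0 := by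
  simp only [List.countP_append, List.countP_cons, countP_fst_reversePath, decide_eq_true_eq]
  split_ifs <;> omega

theorem wordChain_shortcut (A B C : List (E × Bool)) (z : E × Bool) :
    wordChain (A ++ reversePath B ++ C) = wordChain (A ++ z :: B ++ z :: C) := by
  funext e
  have two_eq_zero : (2 : ZMod 2) = 0 := rfl
  simp only [wordChain, countP_fst_shortcut, Nat.cast_add, Nat.cast_mul, Nat.cast_ofNat, two_eq_zero,
    zero_mul, add_zero]

theorem countP_fst_eq_count_add_count (w : List (E × Bool)) (e : E) :
    w.countP (fun x => x.1 = e) = w.count (e, true) + w.count (e, false) := by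
  induction w with
  | nil => rfl
  | cons x w ih =>
    obtain ⟨f, b⟩ := x
    by_cases hf : f = e
    · subst hf; cases b <;> simp [ih, Nat.add_right_comm, Nat.add_assoc, Nat.add_comm 1]
    · simp [ih, hf]

theorem exists_eq_append_cons_append_cons_of_three_le_countP_fst {w : List (E × Bool)} {e : E}
    (h : 3 ≤ w.countP (fun x => x.1 = e)) : ∃ z A B C, w = A ++ z :: B ++ z :: C := by
  rw [countP_fst_eq_count_add_count] at h
  obtain ⟨b, hb⟩ : ∃ b, 2 ≤ w.count (e, b) := by
    by_contra! hlt
    linarith [hlt true, hlt false]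
  exact ⟨_, List.exists_eq_append_cons_append_cons_of_two_le_count hb⟩

theorem sum_countP_fst_eq_length [Fintype E] (w : List (E × Bool)) :
    ∑ e : E, w.countP (fun x => x.1 = e) = w.length := by
  have := Multiset.sum_count_eq_card (s := Finset.univ) (m := (w.map Prod.fst : Multiset E))
    (by simp)
  simpa [List.count_eq_countP, List.countP_map, Function.comp_def, beq_eq_decide] using this

theorem finite_setOf_forall_countP_fst_le [Fintype E] (n : ℕ) :
    {w : List (E × Bool) | ∀ e, w.countP (fun x => x.1 = e) ≤ n}.Finite := by
  refine (List.finite_length_le (E × Bool) (Fintype.card E * n)).subset fun w hw => ?_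
  calc w.length = ∑ e : E, w.countP (fun x => x.1 = e) := (sum_countP_fst_eq_length w).symm
    _ ≤ ∑ _e : E, n := Finset.sum_le_sum fun e _ => hw e
    _ = Fintype.card E * n := by simp

end Crossings

section Reduction

variable {E V : Type*} [DecidableEq E] {ι t : E → V}

theorem IsClosedPath.shortcut {A B C : List (E × Bool)} {z : E × Bool}
    (h : IsClosedPath ι t (A ++ z :: B ++ z :: C)) (h0 : wordChain (A ++ z :: B ++ z :: C) ≠ 0) :
    IsClosedPath ι t (A ++ reversePath B ++ C) := by
  rw [isClosedPath_iff_isWalk] at h ⊢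
  obtain ⟨-, u, hu⟩ := h
  refine ⟨fun hnil => h0 ?_, u, hu.shortcut⟩
  rw [← wordChain_shortcut A B C z, hnil, wordChain_nil]

theorem exists_isClosedPath_countP_fst_le_two {ℓ : E → ℝ} (hℓ : ∀ e, 0 ≤ ℓ e)
    {w : List (E × Bool)} (hw : IsClosedPath ι t w) (hw0 : wordChain w ≠ 0) :
    ∃ w', IsClosedPath ι t w' ∧ wordChain w' = wordChain w ∧
      (∀ e, w'.countP (fun x => x.1 = e) ≤ 2) ∧ wordLen ℓ w' ≤ wordLen ℓ w := by
  by_cases hw2 : ∀ e, w.countP (fun x => x.1 = e) ≤ 2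
  · exact ⟨w, hw, rfl, hw2, le_rfl⟩
  obtain ⟨e, he⟩ := not_forall.mp hw2
  obtain ⟨z, A, B, C, rfl⟩ :=
    exists_eq_append_cons_append_cons_of_three_le_countP_fst (not_le.mp he)
  have hchain := wordChain_shortcut A B C z
  obtain ⟨w', hw', hchain', hcross, hlen⟩ :=
    exists_isClosedPath_countP_fst_le_two hℓ (hw.shortcut hw0) (hchain ▸ hw0)
  refine ⟨w', hw', hchain'.trans hchain, hcross, hlen.trans ?_⟩
  rw [wordLen_shortcut]
  linarith [hℓ z.1]
termination_by w.length
decreasing_by subst_vars; simp [reversePath]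

end Reduction

/-- For each represented class a ∈ H₁(Γ;ℤ/2) the set of representatives crossing
each edge at most twice is finite, nonempty, and contains a loop of minimal
ℓ-length among all representatives, for every positive length function ℓ. -/
theorem stmt_14 {E V : Type*} [Fintype E] [DecidableEq E] (ι t : E → V)
    (a : E → ZMod 2) (ha : a ≠ 0)
    (hrep : ∃ w : List (E × Bool), IsClosedPath ι t w ∧ wordChain w = a) :
    let S : Set (List (E × Bool)) :=
      {w | IsClosedPath ι t w ∧ wordChain w = a ∧
        ∀ e : E, w.countP (fun x => x.1 = e) ≤ 2}
    S.Finite ∧ S.Nonempty ∧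
    ∀ ℓ : E → ℝ, (∀ e, 0 < ℓ e) →
      ∃ w ∈ S, ∀ w' : List (E × Bool), IsClosedPath ι t w' → wordChain w' = a →
        wordLen ℓ w ≤ wordLen ℓ w' := by
  intro S
  have reduce : ∀ ℓ : E → ℝ, (∀ e, 0 ≤ ℓ e) → ∀ w, IsClosedPath ι t w → wordChain w = a →
      ∃ w' ∈ S, wordLen ℓ w' ≤ wordLen ℓ w := by
    rintro ℓ hℓ w hw rfl
    obtain ⟨w', hw', hchain, hcross, hlen⟩ := exists_isClosedPath_countP_fst_le_two hℓ hw ha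
    exact ⟨w', ⟨hw', hchain, hcross⟩, hlen⟩
  have hfin : S.Finite := (finite_setOf_forall_countP_fst_le 2).subset fun w hw => hw.2.2
  obtain ⟨w₀, hw₀, hw₀a⟩ := hrep
  have hne : S.Nonempty :=
    let ⟨w, hw, _⟩ := reduce 0 (fun _ => le_rfl) w₀ hw₀ hw₀a
    ⟨w, hw⟩
  refine ⟨hfin, hne, fun ℓ hℓ => ?_⟩
  obtain ⟨w, hwS, hmin⟩ := Set.exists_min_image S (wordLen ℓ) hfin hne
  refine ⟨w, hwS, fun w' hw' hw'a => ?_⟩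
  obtain ⟨w'', hw''S, hle⟩ := reduce ℓ (fun e => (hℓ e).le) w' hw' hw'a
  exact (hmin w'' hw''S).trans hle
end
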